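/- arXiv:2506.16900 — 2 statements merged into one kernel-verified Lean document; each statement's English description precedes it below -/
import Mathlib

section
/- Let M be an n×n complex unitary matrix and P an n×n complex matrix with Pᴴ = P and P² = 1, such that P·M·P = Mᴴ. Let v_i, v_j ∈ ℂⁿ and e_i, e_j ∈ ℂ satisfy M·v_i = e_i·v_i and M·v_j = e_j·v_j with e_i ≠ e_j and e_i ≠ conj(e_j), and assume v_i ≠ 0. Let s_i, s_j ∈ {1, −1} and set u_i = v_i + s_i·(P·v_i), u_j = v_j + s_j·(P·v_j). Then u_i and u_j are orthogonal: Σ_k conj(u_i(k))·u_j(k) = 0. -/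
open Matrix Complex


private lemma unitary_ip {n : ℕ} (M : Matrix (Fin n) (Fin n) ℂ)
    (hM : Mᴴ * M = 1) (x y : Fin n → ℂ) :
    star (M.mulVec x) ⬝ᵥ M.mulVec y = star x ⬝ᵥ y := by
  rw [Matrix.star_mulVec, Matrix.dotProduct_mulVec, Matrix.vecMul_vecMul, hM,
    Matrix.vecMul_one]

private lemma herm_ip {n : ℕ} (P : Matrix (Fin n) (Fin n) ℂ) (hP : Pᴴ = P)
    (x y : Fin n → ℂ) :
    star (P.mulVec x) ⬝ᵥ y = star x ⬝ᵥ P.mulVec y := by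
  rw [Matrix.star_mulVec, Matrix.dotProduct_mulVec, hP]

/-- **Lemma of Appendix A.** Let `M` be unitary, `P` a Hermitian unitary
involution with `P·M·P = Mᴴ`.  Let `v_i, v_j` be eigenvectors of `M` with eigenvalues
`e_i, e_j` satisfying `e_i ≠ e_j` and `e_i ≠ conj e_j`, with `v_i ≠ 0`.  For signs
`s_i, s_j ∈ {1, −1}`, the transformed vectors `u_i = v_i + s_i·P·v_i` and
`u_j = v_j + s_j·P·v_j` are orthogonal. -/
theorem transformed_eigenvectors_orthogonal {n : ℕ}
    (M P : Matrix (Fin n) (Fin n) ℂ)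
    (hM : Mᴴ * M = 1) (hP : Pᴴ = P) (hP2 : P * P = 1) (hPMP : P * M * P = Mᴴ)
    (vi vj : Fin n → ℂ) (ei ej : ℂ)
    (hvi : M.mulVec vi = ei • vi) (hvj : M.mulVec vj = ej • vj)
    (hne : ei ≠ ej) (hne' : ei ≠ starRingEnd ℂ ej) (hvi0 : vi ≠ 0)
    (si sj : ℂ) (hsi : si = 1 ∨ si = -1) (hsj : sj = 1 ∨ sj = -1) :
    ∑ k, starRingEnd ℂ ((vi + si • P.mulVec vi) k) * ((vj + sj • P.mulVec vj) k) = 0 := by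
  have key : star (vi + si • P.mulVec vi) ⬝ᵥ (vj + sj • P.mulVec vj) = 0 := by
    rcases eq_or_ne vj 0 with h0 | h0
    · simp [h0, Matrix.mulVec_zero]
    have hii : star vi ⬝ᵥ vi ≠ 0 := by
      intro hz
      apply hvi0
      have hconv : ((∑ k, Complex.normSq (vi k) : ℝ) : ℂ) = star vi ⬝ᵥ vi := by
        rw [Complex.ofReal_sum, dotProduct]
        exact Finset.sum_congr rfl fun k _ => by
          rw [Complex.normSq_eq_conj_mul_self]; rfl
      have hsum : ∑ k, Complex.normSq (vi k) = 0 := by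
        exact_mod_cast hconv.trans hz
      funext k
      have := (Finset.sum_eq_zero_iff_of_nonneg
        (fun k _ => Complex.normSq_nonneg (vi k))).mp hsum k (Finset.mem_univ k)
      exact Complex.normSq_eq_zero.mp this
    have hmod : star ei * ei = 1 := by
      have h1 := unitary_ip M hM vi vi
      rw [hvi] at h1
      simp only [star_smul, smul_dotProduct, dotProduct_smul,
        smul_eq_mul, ← mul_assoc] at h1
      have h2 : (star ei * ei - 1) * (star vi ⬝ᵥ vi) = 0 := by linear_combination h1
      rcases mul_eq_zero.mp h2 with h | h
      · exact sub_eq_zero.mp h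
      · exact absurd h hii
    have orth : ∀ (w : Fin n → ℂ) (f : ℂ), M.mulVec w = f • w →
        star ei * f ≠ 1 → star vi ⬝ᵥ w = 0 := by
      intro w f hw hf
      have h1 := unitary_ip M hM vi w
      rw [hvi, hw] at h1
      simp only [star_smul, smul_dotProduct, dotProduct_smul,
        smul_eq_mul, ← mul_assoc] at h1
      have h2 : (star ei * f - 1) * (star vi ⬝ᵥ w) = 0 := by linear_combination h1
      rcases mul_eq_zero.mp h2 with h | h
      · exact absurd (sub_eq_zero.mp h) hf
      · exact h
    have hinv : Mᴴ.mulVec (M.mulVec vj) = vj := by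
      rw [Matrix.mulVec_mulVec, hM, Matrix.one_mulVec]
    have hejne : ej ≠ 0 := by
      rintro rfl
      rw [hvj, zero_smul, Matrix.mulVec_zero] at hinv
      exact h0 hinv.symm
    have hMH : Mᴴ.mulVec vj = ej⁻¹ • vj := by
      rw [hvj, Matrix.mulVec_smul] at hinv
      calc Mᴴ *ᵥ vj = ej⁻¹ • (ej • Mᴴ *ᵥ vj) := by
            rw [smul_smul, inv_mul_cancel₀ hejne, one_smul]
        _ = ej⁻¹ • vj := by rw [hinv]
    have hMP : M * P = P * Mᴴ := by
      rw [← hPMP]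
      simp only [← Matrix.mul_assoc]
      rw [hP2, Matrix.one_mul]
    have hPvj : M.mulVec (P.mulVec vj) = ej⁻¹ • P.mulVec vj := by
      rw [Matrix.mulVec_mulVec, hMP, ← Matrix.mulVec_mulVec, hMH, Matrix.mulVec_smul]
    have hcne : star ei ≠ 0 := by
      intro hz
      rw [hz, zero_mul] at hmod
      exact zero_ne_one hmod
    have o1 : star vi ⬝ᵥ vj = 0 := by
      refine orth vj ej hvj fun h => ?_
      exact hne (mul_left_cancel₀ hcne (hmod.trans h.symm))
    have o2 : star vi ⬝ᵥ P.mulVec vj = 0 := by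
      refine orth (P.mulVec vj) ej⁻¹ hPvj fun h => ?_
      have h1 : star ei = ej := by
        field_simp at h
        exact h
      exact hne' (by rw [← h1, starRingEnd_apply, star_star])
    have o3 : star (P.mulVec vi) ⬝ᵥ vj = 0 := by
      rw [herm_ip P hP]; exact o2
    have o4 : star (P.mulVec vi) ⬝ᵥ P.mulVec vj = 0 := by
      rw [herm_ip P hP, Matrix.mulVec_mulVec, hP2, Matrix.one_mulVec]; exact o1
    simp only [star_add, star_smul, add_dotProduct, dotProduct_add,
      smul_dotProduct, dotProduct_smul, o1, o2, o3, o4,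
      smul_zero, add_zero, zero_add]
  exact key
end

section
/- Let P be an n×n complex matrix with Pᴴ = P and P² = 1, and let k, m be n×n complex matrices with kᴴ = −k, mᴴ = −m, P·k·P = k and P·m·P = −m. Set G = exp(k)·exp(m). Then P·Gᴴ·P·G = exp(2·m). -/
open Matrix Complex

/-- Let `P` be a Hermitian unitary involution and `k, m`
skew-Hermitian matrices with `P·k·P = k` (so `k ∈ 𝔨`) and `P·m·P = −m` (so `m ∈ 𝔪`).
Then for `G = exp(k)·exp(m)` we have `θ(Gᴴ)·G = P·Gᴴ·P·G = exp(2m)`. -/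
theorem theta_Gdagger_G_eq_exp_two_m {n : ℕ}
    (P k m : Matrix (Fin n) (Fin n) ℂ)
    (hP : Pᴴ = P) (hP2 : P * P = 1)
    (hk : kᴴ = -k) (hm : mᴴ = -m)
    (hPk : P * k * P = k) (hPm : P * m * P = -m) :
    P * (NormedSpace.exp k * NormedSpace.exp m)ᴴ * P *
        (NormedSpace.exp k * NormedSpace.exp m) =
      NormedSpace.exp ((2 : ℂ) • m) := by
  have hU : IsUnit P := ⟨⟨P, P, hP2, hP2⟩, rfl⟩
  have hPinv : P⁻¹ = P := Matrix.inv_eq_right_inv hP2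
  have hconj : ∀ A : Matrix (Fin n) (Fin n) ℂ,
      P * NormedSpace.exp A * P = NormedSpace.exp (P * A * P) := by
    intro A
    have h := Matrix.exp_conj P A hU
    rw [hPinv] at h
    exact h.symm
  have hH : (NormedSpace.exp k * NormedSpace.exp m)ᴴ
      = NormedSpace.exp (-m) * NormedSpace.exp (-k) := by
    rw [conjTranspose_mul, ← Matrix.exp_conjTranspose, ← Matrix.exp_conjTranspose, hk, hm]
  have hPmP : P * (-m) * P = m := by
    rw [Matrix.mul_neg, Matrix.neg_mul, hPm, neg_neg]
  have hPkP : P * (-k) * P = -k := by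
    rw [Matrix.mul_neg, Matrix.neg_mul, hPk]
  set X := NormedSpace.exp (-m) with hX
  set Y := NormedSpace.exp (-k) with hY
  have hsplit : (P * X * P) * (P * Y * P) = P * (X * Y) * P := by
    simp only [mul_assoc]
    rw [← mul_assoc P P (Y * P), hP2, one_mul]
  have hmid : P * (X * Y) * P = NormedSpace.exp m * Y := by
    rw [← hsplit, hconj, hconj, hPmP, hPkP]
  have hkk : Y * NormedSpace.exp k = 1 := by
    rw [hY, ← Matrix.exp_add_of_commute (-k) k (Commute.neg_left rfl), neg_add_cancel,
      NormedSpace.exp_zero]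
  have hmm : NormedSpace.exp m * NormedSpace.exp m = NormedSpace.exp ((2 : ℂ) • m) := by
    rw [← Matrix.exp_add_of_commute m m rfl, two_smul]
  calc P * (NormedSpace.exp k * NormedSpace.exp m)ᴴ * P *
        (NormedSpace.exp k * NormedSpace.exp m)
      = (P * (X * Y) * P) * (NormedSpace.exp k * NormedSpace.exp m) := by rw [hH]
    _ = NormedSpace.exp m * ((Y * NormedSpace.exp k) * NormedSpace.exp m) := by
        rw [hmid]; simp only [mul_assoc]
    _ = NormedSpace.exp ((2 : ℂ) • m) := by rw [hkk, one_mul, hmm]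
end
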